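/- Let a < b be real numbers, λ > 0, f : (a,b) → ℝ continuously differentiable with |f'(x)| ≥ λ for all x ∈ (a,b) and f' monotone, and let g : [a,b] → ℂ be continuously differentiable with |g(x)| ≤ G for all x ∈ [a,b]. Then |∫_a^b g(x) e(f(x)) dx| ≪ G/λ + (1/λ) ∫_a^b |g'(x)| dx, with an absolute implied constant. -/

import Mathlib

open scoped BigOperators

/-- `e(t) = exp(2πit)`. -/
noncomputable def ec (t : ℝ) : ℂ := Complex.exp (2 * Real.pi * Complex.I * t)

/-!
Write `I(x) = ∫_a^x e(f)`. Integrating by parts, `∫ g e(f) = g(b) I(b) - ∫ g' I`, so it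
suffices to show `|I(x)| ≤ 1/(πλ)`. Being continuous with `|f'| ≥ λ`, `f'` has constant sign,
and after conjugation `f' ≥ λ`. Then `e(f) = (1/f') · f' e(f)` where `1/f'` is monotone with
values in `[0, 1/λ]`, and every partial integral of `f' e(f) = (e(f)/(2πi))'` is at most `1/π`
in absolute value. The second mean value theorem, proved by slicing `1/f'` into superlevel sets
(which are intervals up to null sets), gives `|I(x)| ≤ (1/λ)(1/π)`.
-/

open MeasureTheory Set intervalIntegral Real
open scoped ComplexConjugate

theorem norm_integral_smul_le_of_norm_setIntegral_superlevel_le {α E : Type*}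
    [MeasurableSpace α] {μ : Measure α} [SFinite μ] [NormedAddCommGroup E] [NormedSpace ℝ E]
    [CompleteSpace E] {ψ : α → ℝ} {h : α → E} {M K : ℝ} (hM : 0 ≤ M)
    (hψ : Measurable ψ) (hψ_mem : ∀ᵐ u ∂μ, ψ u ∈ Icc 0 M) (hh : Integrable h μ)
    (hK : ∀ s, ‖∫ u in {u | s < ψ u}, h u ∂μ‖ ≤ K) :
    ‖∫ u, ψ u • h u ∂μ‖ ≤ M * K := by
  set ν := volume.restrict (Ioo (0 : ℝ) M)
  set F : α × ℝ → E := {p | p.2 < ψ p.1}.indicator (fun p => h p.1)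
  have hlayer : ∀ᵐ u ∂μ, ψ u • h u = ∫ s, F (u, s) ∂ν := by
    filter_upwards [hψ_mem] with u hu
    have hFu : (fun s => F (u, s)) = (Iio (ψ u)).indicator (fun _ => h u) := by
      ext s; simp [F, indicator_apply]
    rw [hFu, MeasureTheory.integral_indicator measurableSet_Iio,
      Measure.restrict_restrict measurableSet_Iio, Iio_inter_Ioo, min_eq_left hu.2,
      setIntegral_const, Real.volume_real_Ioo_of_le hu.1, sub_zero]
  have hF : Integrable F (μ.prod ν) :=
    (hh.comp_fst ν).indicator (measurableSet_lt measurable_snd (hψ.comp measurable_fst))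
  have hinner : ∀ s, ∫ u, F (u, s) ∂μ = ∫ u in {u | s < ψ u}, h u ∂μ := fun s =>
    MeasureTheory.integral_indicator (measurableSet_lt measurable_const hψ)
  calc ‖∫ u, ψ u • h u ∂μ‖ = ‖∫ s, ∫ u, F (u, s) ∂μ ∂ν‖ := by
        rw [integral_congr_ae hlayer, integral_integral_swap (f := fun u s => F (u, s)) hF]
    _ ≤ K * ν.real univ :=
      norm_integral_le_of_norm_le_const (ae_of_all _ fun s => (hinner s).symm ▸ hK s)
    _ = M * K := by simp [ν, Real.volume_real_Ioo_of_le hM, mul_comm]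

theorem IsLowerSet.inter_Ioc_ae_eq_Ioc {L : Set ℝ} {a b : ℝ} (hL : IsLowerSet L)
    (hab : a ≤ b) :
    ∃ c ∈ Icc a b, (L ∩ Ioc a b : Set ℝ) =ᵐ[volume] Ioc a c := by
  -- `a` is inserted so that the supremum is taken over a nonempty set and is `≥ a`
  set T := insert a (L ∩ Ioc a b)
  have hTb : ∀ u ∈ T, u ≤ b := by rintro u (rfl | hu); exacts [hab, hu.2.2]
  have hc : sSup T ≤ b := csSup_le (insert_nonempty _ _) hTb
  refine ⟨sSup T, ⟨le_csSup ⟨b, hTb⟩ (mem_insert _ _), hc⟩, ?_⟩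
  have hsub : L ∩ Ioc a b ⊆ Ioc a (sSup T) := fun u hu =>
    ⟨hu.2.1, le_csSup ⟨b, hTb⟩ (mem_insert_of_mem _ hu)⟩
  have hsup : Ioo a (sSup T) ⊆ L ∩ Ioc a b := by
    intro u hu
    obtain ⟨v, hv, huv⟩ := exists_lt_of_lt_csSup (insert_nonempty _ _) hu.2
    rcases hv with rfl | hv
    · exact absurd huv hu.1.not_gt
    · exact ⟨hL huv.le hv.1, hu.1, hu.2.le.trans hc⟩
  exact hsub.eventuallyLE.antisymm (Ioo_ae_eq_Ioc.symm.le.trans hsup.eventuallyLE)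

theorem IsUpperSet.inter_Ioc_ae_eq_Ioc {U : Set ℝ} {a b : ℝ} (hU : IsUpperSet U)
    (hab : a ≤ b) :
    ∃ c ∈ Icc a b, (U ∩ Ioc a b : Set ℝ) =ᵐ[volume] Ioc c b := by
  obtain ⟨c, hc, hL⟩ := hU.compl.inter_Ioc_ae_eq_Ioc hab
  refine ⟨c, hc, ?_⟩
  have hset : Ioc a b \ Ioc a c = Ioc c b := by
    ext u; simp only [mem_sdiff, mem_Ioc]; grind [hc.1, hc.2]
  have hdiff := (Filter.EventuallyEq.refl _ (Ioc a b)).diff hL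
  rwa [sdiff_inter_self_eq_sdiff, sdiff_compl, hset, inter_comm] at hdiff

section SecondMeanValue

variable {E : Type*} [NormedAddCommGroup E] [NormedSpace ℝ E] [CompleteSpace E]
  {a b K : ℝ} {ψ : ℝ → ℝ} {h : ℝ → E}

theorem norm_integral_smul_le_of_antitoneOn (hab : a ≤ b) (hψ : AntitoneOn ψ (Icc a b))
    (hψb : 0 ≤ ψ b) (hh : IntervalIntegrable h volume a b)
    (hK : ∀ c ∈ Icc a b, ‖∫ t in a..c, h t‖ ≤ K) :
    ‖∫ u in a..b, ψ u • h u‖ ≤ ψ a * K := by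
  have ha : a ∈ Icc a b := left_mem_Icc.2 hab
  have hb : b ∈ Icc a b := right_mem_Icc.2 hab
  obtain ⟨φ, hφ, hφψ⟩ := hψ.exists_antitone_extension
    ⟨ψ b, by rintro _ ⟨u, hu, rfl⟩; exact hψ hu hb hu.2⟩
    ⟨ψ a, by rintro _ ⟨u, hu, rfl⟩; exact hψ ha hu hu.1⟩
  have hφ_mem : ∀ u ∈ Ioc a b, φ u ∈ Icc 0 (ψ a) := fun u hu => by
    have hu' := Ioc_subset_Icc_self hu
    rw [← hφψ hu']
    exact ⟨hψb.trans (hψ hu' hb hu.2), hψ ha hu' hu.1.le⟩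
  rw [integral_of_le hab, setIntegral_congr_fun measurableSet_Ioc
    fun u hu => by rw [hφψ (Ioc_subset_Icc_self hu)]]
  refine norm_integral_smul_le_of_norm_setIntegral_superlevel_le (hψb.trans (hψ ha hb hab))
    hφ.measurable (ae_restrict_of_forall_mem measurableSet_Ioc hφ_mem) hh.1 fun s => ?_
  obtain ⟨c, hc, hae⟩ := IsLowerSet.inter_Ioc_ae_eq_Ioc (L := {u | s < φ u})
    (fun x y hyx hx => lt_of_lt_of_le hx (hφ hyx)) hab
  rw [Measure.restrict_restrict (measurableSet_lt measurable_const hφ.measurable),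
    setIntegral_congr_set hae, ← integral_of_le hc.1]
  exact hK c hc

theorem norm_integral_smul_le_of_monotoneOn (hab : a ≤ b) (hψ : MonotoneOn ψ (Icc a b))
    (hψa : 0 ≤ ψ a) (hh : IntervalIntegrable h volume a b)
    (hK : ∀ c ∈ Icc a b, ‖∫ t in c..b, h t‖ ≤ K) :
    ‖∫ u in a..b, ψ u • h u‖ ≤ ψ b * K := by
  have ha : a ∈ Icc a b := left_mem_Icc.2 hab
  have hb : b ∈ Icc a b := right_mem_Icc.2 hab
  obtain ⟨φ, hφ, hφψ⟩ := hψ.exists_monotone_extension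
    ⟨ψ a, by rintro _ ⟨u, hu, rfl⟩; exact hψ ha hu hu.1⟩
    ⟨ψ b, by rintro _ ⟨u, hu, rfl⟩; exact hψ hu hb hu.2⟩
  have hφ_mem : ∀ u ∈ Ioc a b, φ u ∈ Icc 0 (ψ b) := fun u hu => by
    have hu' := Ioc_subset_Icc_self hu
    rw [← hφψ hu']
    exact ⟨hψa.trans (hψ ha hu' hu.1.le), hψ hu' hb hu.2⟩
  rw [integral_of_le hab, setIntegral_congr_fun measurableSet_Ioc
    fun u hu => by rw [hφψ (Ioc_subset_Icc_self hu)]]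
  refine norm_integral_smul_le_of_norm_setIntegral_superlevel_le (hψa.trans (hψ ha hb hab))
    hφ.measurable (ae_restrict_of_forall_mem measurableSet_Ioc hφ_mem) hh.1 fun s => ?_
  obtain ⟨c, hc, hae⟩ := IsUpperSet.inter_Ioc_ae_eq_Ioc (U := {u | s < φ u})
    (fun x y hxy hx => lt_of_lt_of_le hx (hφ hxy)) hab
  rw [Measure.restrict_restrict (measurableSet_lt measurable_const hφ.measurable),
    setIntegral_congr_set hae, ← integral_of_le hc.2]
  exact hK c hc

end SecondMeanValue

theorem norm_ec (t : ℝ) : ‖ec t‖ = 1 := by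
  rw [ec, Complex.norm_exp]
  simp

theorem ec_neg (t : ℝ) : ec (-t) = conj (ec t) := by
  rw [ec, ec, ← Complex.exp_conj]
  simp only [Complex.ofReal_neg, map_mul, Complex.conj_I, Complex.conj_ofReal, map_ofNat]
  ring_nf

theorem continuous_ec : Continuous ec := by unfold ec; fun_prop

theorem HasDerivAt.ec {f : ℝ → ℝ} {f' x : ℝ} (hf : HasDerivAt f f' x) :
    HasDerivAt (fun t => ec (f t)) (2 * π * Complex.I * f' * ec (f x)) x := by
  unfold _root_.ec
  convert (hf.ofReal_comp.const_mul (2 * π * Complex.I)).cexp using 1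
  ring

theorem norm_integral_deriv_mul_ec_le {a b : ℝ} {f f' : ℝ → ℝ}
    (hf : ∀ x ∈ uIcc a b, HasDerivAt f (f' x) x) (hf' : IntervalIntegrable f' volume a b) :
    ‖∫ x in a..b, (f' x : ℂ) * ec (f x)‖ ≤ 1 / π := by
  have h2πI : 2 * π * Complex.I ≠ 0 := by simp [pi_ne_zero]
  have hderiv : ∀ x ∈ uIcc a b,
      HasDerivAt (fun t => ec (f t) / (2 * π * Complex.I)) (f' x * ec (f x)) x := fun x hx =>
    ((hf x hx).ec.div_const _).congr_deriv (by field_simp)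
  have hf'ℂ : IntervalIntegrable (fun x => (f' x : ℂ)) volume a b :=
    ⟨hf'.1.ofReal, hf'.2.ofReal⟩
  have hint : IntervalIntegrable (fun x => (f' x : ℂ) * ec (f x)) volume a b :=
    hf'ℂ.mul_continuousOn (continuous_ec.comp_continuousOn
      fun x hx => (hf x hx).continuousAt.continuousWithinAt)
  rw [integral_eq_sub_of_hasDerivAt hderiv hint]
  calc ‖ec (f b) / (2 * π * Complex.I) - ec (f a) / (2 * π * Complex.I)‖
      ≤ ‖ec (f b) / (2 * π * Complex.I)‖ + ‖ec (f a) / (2 * π * Complex.I)‖ :=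
        norm_sub_le _ _
    _ = 1 / π := by
      simp only [norm_div, norm_ec, norm_mul, Complex.norm_I, Complex.norm_real,
        Real.norm_eq_abs, abs_of_pos pi_pos, Complex.norm_ofNat]
      field_simp
      ring

theorem norm_integral_ec_le_of_le_deriv {a b lam : ℝ} {f f' : ℝ → ℝ} (hab : a ≤ b)
    (hf : ∀ x ∈ Icc a b, HasDerivAt f (f' x) x) (hf' : ContinuousOn f' (Icc a b))
    (hmono : MonotoneOn f' (Icc a b) ∨ AntitoneOn f' (Icc a b)) (hlam : 0 < lam)
    (hle : ∀ x ∈ Icc a b, lam ≤ f' x) :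
    ‖∫ x in a..b, ec (f x)‖ ≤ 1 / (π * lam) := by
  have hpos : ∀ x ∈ Icc a b, 0 < f' x := fun x hx => hlam.trans_le (hle x hx)
  have hK : ∀ c ∈ Icc a b, ∀ d ∈ Icc a b,
      ‖∫ x in c..d, (f' x : ℂ) * ec (f x)‖ ≤ 1 / π := fun c hc d hd =>
    norm_integral_deriv_mul_ec_le (fun x hx => hf x (uIcc_subset_Icc hc hd hx))
      (hf'.mono (uIcc_subset_Icc hc hd)).intervalIntegrable
  have hint : IntervalIntegrable (fun x => (f' x : ℂ) * ec (f x)) volume a b :=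
    ((Complex.continuous_ofReal.comp_continuousOn hf').mul (continuous_ec.comp_continuousOn
      fun x hx => (hf x hx).continuousAt.continuousWithinAt)).intervalIntegrable_of_Icc hab
  have hfactor :
      ∫ x in a..b, ec (f x) = ∫ x in a..b, (f' x)⁻¹ • ((f' x : ℂ) * ec (f x)) := by
    refine integral_congr fun x hx => ?_
    rw [uIcc_of_le hab] at hx
    have : (f' x : ℂ) ≠ 0 := Complex.ofReal_ne_zero.2 (hpos x hx).ne'
    simp only [Complex.real_smul, Complex.ofReal_inv]
    field_simp
  have ha : a ∈ Icc a b := left_mem_Icc.2 hab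
  have hb : b ∈ Icc a b := right_mem_Icc.2 hab
  rw [hfactor]
  rcases hmono with hm | hm
  · have hψ : AntitoneOn (fun x => (f' x)⁻¹) (Icc a b) := fun x hx y hy hxy =>
      inv_anti₀ (hpos x hx) (hm hx hy hxy)
    have hbonnet := norm_integral_smul_le_of_antitoneOn hab hψ (inv_nonneg.2 (hpos b hb).le) hint
      fun c hc => hK a ha c hc
    calc _ ≤ (f' a)⁻¹ * (1 / π) := hbonnet
      _ ≤ lam⁻¹ * (1 / π) := by gcongr; exact hle a ha
      _ = 1 / (π * lam) := by ring
  · have hψ : MonotoneOn (fun x => (f' x)⁻¹) (Icc a b) := fun x hx y hy hxy =>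
      inv_anti₀ (hpos y hy) (hm hx hy hxy)
    have hbonnet := norm_integral_smul_le_of_monotoneOn hab hψ (inv_nonneg.2 (hpos a ha).le) hint
      fun c hc => hK c hc b hb
    calc _ ≤ (f' b)⁻¹ * (1 / π) := hbonnet
      _ ≤ lam⁻¹ * (1 / π) := by gcongr; exact hle b hb
      _ = 1 / (π * lam) := by ring

theorem IsPreconnected.forall_le_or_forall_le_neg_of_le_abs {α : Type*} [TopologicalSpace α]
    {s : Set α} {p : α → ℝ} {lam : ℝ} (hs : IsPreconnected s) (hp : ContinuousOn p s)
    (hlam : 0 < lam) (habs : ∀ x ∈ s, lam ≤ |p x|) :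
    (∀ x ∈ s, lam ≤ p x) ∨ (∀ x ∈ s, p x ≤ -lam) := by
  refine or_iff_not_imp_left.2 fun hneg y hy => ?_
  push Not at hneg
  obtain ⟨x, hx, hpx⟩ := hneg
  by_contra! hpy
  have hx' : p x ≤ -lam := (le_abs'.1 (habs x hx)).resolve_right hpx.not_ge
  have hy' : lam ≤ p y := (le_abs'.1 (habs y hy)).resolve_left hpy.not_ge
  obtain ⟨z, hz, hpz⟩ := hs.intermediate_value hx hy hp
    (show (0 : ℝ) ∈ Icc (p x) (p y) from ⟨by linarith, by linarith⟩)
  have := habs z hz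
  rw [hpz, abs_zero] at this
  linarith

theorem norm_integral_ec_le_of_le_abs_deriv {a b lam : ℝ} {f f' : ℝ → ℝ} (hab : a ≤ b)
    (hf : ∀ x ∈ Icc a b, HasDerivAt f (f' x) x) (hf' : ContinuousOn f' (Icc a b))
    (hmono : MonotoneOn f' (Icc a b) ∨ AntitoneOn f' (Icc a b)) (hlam : 0 < lam)
    (habs : ∀ x ∈ Icc a b, lam ≤ |f' x|) :
    ‖∫ x in a..b, ec (f x)‖ ≤ 1 / (π * lam) := by
  rcases isPreconnected_Icc.forall_le_or_forall_le_neg_of_le_abs hf' hlam habs with hle | hle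
  · exact norm_integral_ec_le_of_le_deriv hab hf hf' hmono hlam hle
  · have hneg := norm_integral_ec_le_of_le_deriv (f := fun x => -f x) (f' := fun x => -f' x) hab
      (fun x hx => (hf x hx).neg) hf'.neg (hmono.symm.imp AntitoneOn.neg MonotoneOn.neg) hlam
      (fun x hx => le_neg.2 (hle x hx))
    simpa only [ec_neg, intervalIntegral_conj, RCLike.norm_conj] using hneg

theorem norm_integral_mul_le_of_norm_primitive_le {a b G S : ℝ} {g g' φ : ℝ → ℂ}
    (hab : a ≤ b) (hg : ∀ x ∈ Icc a b, HasDerivAt g (g' x) x)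
    (hg' : IntervalIntegrable g' volume a b)
    (hφ : ContinuousOn φ (Icc a b)) (hGb : ‖g b‖ ≤ G)
    (hS : ∀ x ∈ Icc a b, ‖∫ t in a..x, φ t‖ ≤ S) :
    ‖∫ x in a..b, g x * φ x‖ ≤ S * (G + ∫ x in a..b, ‖g' x‖) := by
  set I : ℝ → ℂ := fun x => ∫ t in a..x, φ t
  have hφi : IntervalIntegrable φ volume a b := hφ.intervalIntegrable_of_Icc hab
  have hI : ContinuousOn I (Icc a b) := by
    simpa only [uIcc_of_le hab] using continuousOn_primitive_interval' hφi left_mem_uIcc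
  have hIφ : ∀ x ∈ Ioo a b, HasDerivAt I (φ x) x := fun x hx =>
    integral_hasDerivAt_right
      ((hφ.mono (Icc_subset_Icc_right hx.2.le)).intervalIntegrable_of_Icc hx.1.le)
      ((hφ.mono Ioo_subset_Icc_self).stronglyMeasurableAtFilter isOpen_Ioo x hx)
      (hφ.continuousAt (Icc_mem_nhds hx.1 hx.2))
  have hg_cont : ContinuousOn g (Icc a b) := fun x hx =>
    (hg x hx).continuousAt.continuousWithinAt
  have hibp := integral_mul_deriv_eq_deriv_mul_of_hasDerivAt (u := g) (v := I)
    (by rw [uIcc_of_le hab]; exact hg_cont) (by rw [uIcc_of_le hab]; exact hI)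
    (fun x hx => hg x (Ioo_subset_Icc_self (by rwa [min_eq_left hab, max_eq_right hab] at hx)))
    (fun x hx => hIφ x (by rwa [min_eq_left hab, max_eq_right hab] at hx)) hg' hφi
  have hb : b ∈ Icc a b := right_mem_Icc.2 hab
  rw [hibp, show I a = 0 from integral_same, mul_zero, sub_zero]
  calc ‖g b * I b - ∫ x in a..b, g' x * I x‖
      ≤ ‖g b * I b‖ + ‖∫ x in a..b, g' x * I x‖ := norm_sub_le _ _
    _ ≤ G * S + ∫ x in a..b, ‖g' x‖ * S := by
      gcongr
      · rw [norm_mul]; exact mul_le_mul hGb (hS b hb) (norm_nonneg _) ((norm_nonneg _).trans hGb)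
      · refine norm_integral_le_of_norm_le hab (ae_of_all _ fun x hx => ?_) (hg'.norm.mul_const S)
        rw [norm_mul]
        exact mul_le_mul_of_nonneg_left (hS x (Ioc_subset_Icc_self hx)) (norm_nonneg _)
    _ = S * (G + ∫ x in a..b, ‖g' x‖) := by rw [intervalIntegral.integral_mul_const]; ring

/-- The first derivative test for oscillatory integrals with a weight:
if `|f'| ≥ λ` on `(a,b)`, `f'` is monotone, and `|g| ≤ G`, then
`|∫_a^b g(x) e(f(x)) dx| ≪ G/λ + (1/λ) ∫_a^b |g'(x)| dx` with an absolute constant. -/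
theorem first_derivative_test :
    ∃ C : ℝ, 0 < C ∧
      ∀ (a b lam G : ℝ) (f f' : ℝ → ℝ) (g g' : ℝ → ℂ),
        a < b → 0 < lam →
        (∀ x ∈ Set.Icc a b, HasDerivAt f (f' x) x) →
        ContinuousOn f' (Set.Icc a b) →
        (MonotoneOn f' (Set.Icc a b) ∨ AntitoneOn f' (Set.Icc a b)) →
        (∀ x ∈ Set.Ioo a b, lam ≤ |f' x|) →
        (∀ x ∈ Set.Icc a b, HasDerivAt g (g' x) x) →
        ContinuousOn g' (Set.Icc a b) →
        (∀ x ∈ Set.Icc a b, ‖g x‖ ≤ G) →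
        ‖∫ x in a..b, g x * ec (f x)‖
          ≤ C * (G / lam + lam⁻¹ * ∫ x in a..b, ‖g' x‖) := by
  refine ⟨1, one_pos, fun a b lam G f f' g g' hab hlam hf hf' hmono habs hg hg' hG => ?_⟩
  have habs' : ∀ x ∈ Icc a b, lam ≤ |f' x| := fun x hx =>
    continuousWithinAt_const.closure_le (f := fun _ => lam) (g := fun x => |f' x|)
      (by rwa [closure_Ioo hab.ne]) ((hf' x hx).abs.mono Ioo_subset_Icc_self) habs
  have hprim : ∀ x ∈ Icc a b, ‖∫ t in a..x, ec (f t)‖ ≤ lam⁻¹ := fun x hx => by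
    have hsub : Icc a x ⊆ Icc a b := Icc_subset_Icc_right hx.2
    calc _ ≤ 1 / (π * lam) := norm_integral_ec_le_of_le_abs_deriv hx.1
          (fun t ht => hf t (hsub ht)) (hf'.mono hsub) (hmono.imp (·.mono hsub) (·.mono hsub))
          hlam (fun t ht => habs' t (hsub ht))
      _ ≤ lam⁻¹ := by
        rw [one_div]
        exact inv_anti₀ hlam (le_mul_of_one_le_left hlam.le (by linarith [pi_gt_three]))
  have hec : ContinuousOn (fun x => ec (f x)) (Icc a b) :=
    continuous_ec.comp_continuousOn fun x hx => (hf x hx).continuousAt.continuousWithinAt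
  calc _ ≤ lam⁻¹ * (G + ∫ x in a..b, ‖g' x‖) :=
        norm_integral_mul_le_of_norm_primitive_le hab.le hg (hg'.intervalIntegrable_of_Icc hab.le)
          hec (hG b (right_mem_Icc.2 hab.le)) hprim
    _ = 1 * (G / lam + lam⁻¹ * ∫ x in a..b, ‖g' x‖) := by ring
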